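/- Under the 4NAT test distribution, the marginal distribution of y is uniform on (ZMod 3)^L, and y is independent of x; the same holds for z and for w. -/

import Mathlib

open Finset

/-- The 4-Not-All-There predicate: some element of `ZMod 3` does not occur
among the four inputs. -/
def fourNAT (a : Fin 4 → ZMod 3) : Prop := ∃ c : ZMod 3, ∀ i, a i ≠ c

/-- The TwoPair predicate: the four inputs take exactly two distinct values,
each occurring exactly twice. -/
def TwoPair (a : Fin 4 → ZMod 3) : Prop :=
  ∃ b c : ZMod 3, b ≠ c ∧
    (univ.filter fun i => a i = b).card = 2 ∧
    (univ.filter fun i => a i = c).card = 2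

-- Probability of an event `E x y z w` under the 4NAT test distribution with
-- parameters `d`, `K` (coordinates `j ∈ [L]`, `L = dK`, are encoded as pairs
-- `(i, j') ∈ Fin K × Fin d` with block `π(j) = i`): `x` is uniform on
-- `(ZMod 3)^K` and, independently for each coordinate `j`, `(y_j, z_j, w_j)`
-- is uniform on the 6 triples with `TwoPair (x_{π(j)}, y_j, z_j, w_j)`.
open Classical in
noncomputable def natTestPr (d K : ℕ)
    (E : (Fin K → ZMod 3) → ((Fin K × Fin d) → ZMod 3) →
         ((Fin K × Fin d) → ZMod 3) → ((Fin K × Fin d) → ZMod 3) → Prop) : ℝ :=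
  (∑ x : Fin K → ZMod 3, ∑ y : (Fin K × Fin d) → ZMod 3,
    ∑ z : (Fin K × Fin d) → ZMod 3, ∑ w : (Fin K × Fin d) → ZMod 3,
      (if (∀ j : Fin K × Fin d, TwoPair ![x j.1, y j, z j, w j]) ∧ E x y z w
       then 1 else 0))
    / (3 ^ K * 6 ^ (d * K))

/-!
For fixed `x_{π(j)}` and `y_j` exactly two pairs `(z_j, w_j)` complete a TwoPair, and the
coordinates are independent, so every `(x, y)` has exactly `2 ^ L` completions: `(x, y)` is
uniform on `(ZMod 3)^K × (ZMod 3)^L`. TwoPair is invariant under permuting its inputs, so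
exchanging the roles of `y`, `z`, `w` gives the same for `z` and `w`.
-/

instance : DecidablePred TwoPair := fun a => by unfold TwoPair; infer_instance

theorem twoPair_comp_perm (a : Fin 4 → ZMod 3) (σ : Equiv.Perm (Fin 4)) :
    TwoPair (a ∘ σ) ↔ TwoPair a := by
  have hcard (b : ZMod 3) : #{i | (a ∘ σ) i = b} = #{i | a i = b} := card_equiv σ (by simp)
  simp only [TwoPair, hcard]

theorem twoPair_swap_yz (a b c e : ZMod 3) : TwoPair ![a, c, b, e] ↔ TwoPair ![a, b, c, e] := by
  convert twoPair_comp_perm ![a, b, c, e] (Equiv.swap 1 2) using 2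
  funext i; fin_cases i <;> rfl

theorem twoPair_swap_zw (a b c e : ZMod 3) : TwoPair ![a, b, e, c] ↔ TwoPair ![a, b, c, e] := by
  convert twoPair_comp_perm ![a, b, c, e] (Equiv.swap 2 3) using 2
  funext i; fin_cases i <;> rfl

-- If `a = b` the completions are `(c, c)` with `c ≠ a`, otherwise `(a, b)` and `(b, a)`.
theorem sum_boole_twoPair (a b : ZMod 3) :
    ∑ c : ZMod 3, ∑ e : ZMod 3, (if TwoPair ![a, b, c, e] then 1 else 0 : ℕ) = 2 := by
  revert a b; decide

theorem Fintype.prod_sum_sum {R J α β : Type*} [CommSemiring R] [Fintype J] [DecidableEq J]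
    [Fintype α] [Fintype β] (f : J → α → β → R) :
    ∏ j, ∑ a, ∑ b, f j a b = ∑ u : J → α, ∑ v : J → β, ∏ j, f j (u j) (v j) := by
  simp only [Fintype.prod_sum]

theorem sum_boole_forall_twoPair {J : Type*} [Fintype J] [DecidableEq J] (a b : J → ZMod 3) :
    ∑ z : J → ZMod 3, ∑ w : J → ZMod 3,
      (if ∀ j, TwoPair ![a j, b j, z j, w j] then 1 else 0 : ℝ) = 2 ^ Fintype.card J := by
  have hcoord (j : J) : ∑ c, ∑ e, (if TwoPair ![a j, b j, c, e] then 1 else 0 : ℝ) = 2 := by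
    exact_mod_cast sum_boole_twoPair (a j) (b j)
  simp only [← Fintype.prod_boole]
  rw [← Fintype.prod_sum_sum (fun j c e => if TwoPair ![a j, b j, c, e] then (1 : ℝ) else 0)]
  simp only [hcoord, prod_const, card_univ]

section natTestPr

variable (d K : ℕ) (E : (Fin K → ZMod 3) → ((Fin K × Fin d) → ZMod 3) →
  ((Fin K × Fin d) → ZMod 3) → ((Fin K × Fin d) → ZMod 3) → Prop)

-- `natTestPr` is stated with classical decidability; this form accepts computable instances.
theorem natTestPr_eq_sum [∀ x y z w, Decidable (E x y z w)] :
    natTestPr d K E = (∑ x : Fin K → ZMod 3, ∑ y : (Fin K × Fin d) → ZMod 3,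
      ∑ z : (Fin K × Fin d) → ZMod 3, ∑ w : (Fin K × Fin d) → ZMod 3,
        (if (∀ j : Fin K × Fin d, TwoPair ![x j.1, y j, z j, w j]) ∧ E x y z w
         then 1 else 0)) / (3 ^ K * 6 ^ (d * K)) := by
  unfold natTestPr
  congr!

theorem natTestPr_comm_yz : natTestPr d K E = natTestPr d K (fun x y z w => E x z y w) := by
  unfold natTestPr
  refine congrArg (· / _) (sum_congr rfl fun x _ => ?_)
  rw [sum_comm]
  refine sum_congr rfl fun y _ => sum_congr rfl fun z _ => sum_congr rfl fun w _ => ?_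
  congr 1
  exact propext (and_congr_left' (forall_congr' fun j => twoPair_swap_yz ..))

theorem natTestPr_comm_zw : natTestPr d K E = natTestPr d K (fun x y z w => E x y w z) := by
  unfold natTestPr
  refine congrArg (· / _) (sum_congr rfl fun x _ => sum_congr rfl fun y _ => ?_)
  rw [sum_comm]
  refine sum_congr rfl fun z _ => sum_congr rfl fun w _ => ?_
  congr 1
  exact propext (and_congr_left' (forall_congr' fun j => twoPair_swap_zw ..))

theorem natTestPr_y_eq (y₀ : (Fin K × Fin d) → ZMod 3) :
    natTestPr d K (fun _ y _ _ => y = y₀) = 1 / 3 ^ (d * K) := by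
  rw [natTestPr_eq_sum]
  simp only [and_comm (b := _ = y₀), ite_and, sum_ite_irrel, sum_const_zero, sum_ite_eq',
    mem_univ, if_true, sum_boole_forall_twoPair, sum_const, card_univ, Fintype.card_fun,
    Fintype.card_prod, Fintype.card_fin, ZMod.card, nsmul_eq_mul, Nat.cast_pow, Nat.cast_ofNat]
  rw [show (6 : ℝ) = 2 * 3 by norm_num, mul_pow, mul_comm K d]
  field_simp

theorem natTestPr_x_y_eq (x₀ : Fin K → ZMod 3) (y₀ : (Fin K × Fin d) → ZMod 3) :
    natTestPr d K (fun x y _ _ => x = x₀ ∧ y = y₀) = 1 / 3 ^ K * (1 / 3 ^ (d * K)) := by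
  rw [natTestPr_eq_sum]
  simp only [and_comm (b := _ ∧ _), ite_and, sum_ite_irrel, sum_const_zero, sum_ite_eq',
    mem_univ, if_true, sum_boole_forall_twoPair, Fintype.card_prod, Fintype.card_fin]
  rw [show (6 : ℝ) = 2 * 3 by norm_num, mul_pow, mul_comm K d]
  field_simp

end natTestPr

theorem natTest_marginals_general (d K : ℕ)
    (x₀ : Fin K → ZMod 3) (y₀ z₀ w₀ : (Fin K × Fin d) → ZMod 3) :
    natTestPr d K (fun _x y _z _w => y = y₀) = 1 / 3 ^ (d * K) ∧
    natTestPr d K (fun x y _z _w => x = x₀ ∧ y = y₀)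
      = (1 / 3 ^ K) * (1 / 3 ^ (d * K)) ∧
    natTestPr d K (fun _x _y z _w => z = z₀) = 1 / 3 ^ (d * K) ∧
    natTestPr d K (fun x _y z _w => x = x₀ ∧ z = z₀)
      = (1 / 3 ^ K) * (1 / 3 ^ (d * K)) ∧
    natTestPr d K (fun _x _y _z w => w = w₀) = 1 / 3 ^ (d * K) ∧
    natTestPr d K (fun x _y _z w => x = x₀ ∧ w = w₀)
      = (1 / 3 ^ K) * (1 / 3 ^ (d * K)) := by
  refine ⟨natTestPr_y_eq d K y₀, natTestPr_x_y_eq d K x₀ y₀, ?_, ?_, ?_, ?_⟩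
  · rw [natTestPr_comm_yz]; exact natTestPr_y_eq d K z₀
  · rw [natTestPr_comm_yz]; exact natTestPr_x_y_eq d K x₀ z₀
  · rw [natTestPr_comm_zw, natTestPr_comm_yz]; exact natTestPr_y_eq d K w₀
  · rw [natTestPr_comm_zw, natTestPr_comm_yz]; exact natTestPr_x_y_eq d K x₀ w₀

theorem natTest_marginals (d K : ℕ) (hd : 0 < d) (hK : 0 < K)
    (x₀ : Fin K → ZMod 3) (y₀ z₀ w₀ : (Fin K × Fin d) → ZMod 3) :
    natTestPr d K (fun _x y _z _w => y = y₀) = 1 / 3 ^ (d * K) ∧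
    natTestPr d K (fun x y _z _w => x = x₀ ∧ y = y₀)
      = (1 / 3 ^ K) * (1 / 3 ^ (d * K)) ∧
    natTestPr d K (fun _x _y z _w => z = z₀) = 1 / 3 ^ (d * K) ∧
    natTestPr d K (fun x _y z _w => x = x₀ ∧ z = z₀)
      = (1 / 3 ^ K) * (1 / 3 ^ (d * K)) ∧
    natTestPr d K (fun _x _y _z w => w = w₀) = 1 / 3 ^ (d * K) ∧
    natTestPr d K (fun x _y _z w => x = x₀ ∧ w = w₀)
      = (1 / 3 ^ K) * (1 / 3 ^ (d * K)) :=
  natTest_marginals_general d K x₀ y₀ z₀ w₀
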